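/- Let S be any n×n matrix over ℤ[t,t⁻¹], let J be S padded with a last row (0,…,0,1) and last column (0,…,0,1)ᵀ to size (n+1)×(n+1), and let Ω be the identity matrix of size n+1 except with bottom-right 2×2 block [[1+t, t²],[−1, 1−t]]. Then det(J·Ω − I) = −t · det(S − I). -/

import Mathlib

open Matrix LaurentPolynomial

/-- Pad an `n × n` matrix with a last row `(0,…,0,1)` and last column `(0,…,0,1)ᵀ`. -/
noncomputable def pad (n : ℕ) (S : Matrix (Fin n) (Fin n) (LaurentPolynomial ℤ)) :
    Matrix (Fin (n + 1)) (Fin (n + 1)) (LaurentPolynomial ℤ) :=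
  Matrix.of fun i j =>
    if hi : (i : ℕ) < n then
      if hj : (j : ℕ) < n then S ⟨i, hi⟩ ⟨j, hj⟩ else 0
    else if (j : ℕ) < n then 0 else 1

/-- The `(n+1) × (n+1)` identity except the bottom-right `2 × 2` block is
`[[1+t, t²], [-1, 1-t]]` (requires `1 ≤ n`). -/
noncomputable def wadaStab (n : ℕ) (hn : 1 ≤ n) :
    Matrix (Fin (n + 1)) (Fin (n + 1)) (LaurentPolynomial ℤ) :=
  1 + single ⟨n - 1, by omega⟩ ⟨n - 1, by omega⟩ (T 1)
    + single ⟨n - 1, by omega⟩ ⟨n, by omega⟩ (T 2)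
    + single ⟨n, by omega⟩ ⟨n - 1, by omega⟩ (-1)
    + single ⟨n, by omega⟩ ⟨n, by omega⟩ (-(T 1))

/-! Let `E` be the transvection adding `-t⁻¹` times the last column to the second-to-last one
(`t` is a unit of `ℤ[t,t⁻¹]`). Since `det E = 1`, `det (J Ω - 1) = det (J (Ω E) - E)`. Now `Ω E` has
identity upper-left `n × n` block, and its last row agrees with that of `E` except for the corner
entry `1 - t`; as `J` fixes the last row, `J (Ω E) - E` is block upper triangular with diagonal
blocks `S - 1` and `-t`. -/

namespace Matrix

variable {R : Type*} [CommRing R]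

theorem det_succ_of_row_last_eq_zero {n : ℕ} (M : Matrix (Fin (n + 1)) (Fin (n + 1)) R)
    (hM : ∀ j : Fin n, M (Fin.last n) j.castSucc = 0) :
    M.det = M (Fin.last n) (Fin.last n) * (M.submatrix Fin.castSucc Fin.castSucc).det := by
  rw [det_succ_row M (Fin.last n), Fin.sum_univ_castSucc]
  simp [hM, Fin.succAbove_last, ← two_mul]

/-- `Ω`, with its `2 × 2` block at rows and columns `p`, `q`. -/
def wadaBlock {ι : Type*} [DecidableEq ι] (p q : ι) (t : R) : Matrix ι ι R :=
  1 + single p p t + single p q (t ^ 2) + single q p (-1) + single q q (-t)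

theorem wadaBlock_mul_transvection {ι : Type*} [Fintype ι] [DecidableEq ι] {p q : ι} (hpq : p ≠ q)
    {t u : R} (htu : t * u = 1) :
    wadaBlock p q t * transvection q p (-u)
      = 1 + single p q (t ^ 2) + single q p (-u) + single q q (-t) := by
  have htu' : t ^ 2 * u = t := by rw [sq, mul_assoc, htu, mul_one]
  simp only [wadaBlock, transvection, Matrix.mul_add, Matrix.add_mul, Matrix.mul_one,
    Matrix.one_mul, single_mul_single_same, single_mul_single_of_ne _ _ _ _ hpq, mul_neg,
    neg_mul, htu', htu, ← Matrix.single_neg]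
  abel

end Matrix

section pad

variable {n : ℕ}

theorem pad_mul_submatrix_castSucc (S : Matrix (Fin n) (Fin n) (LaurentPolynomial ℤ))
    (M : Matrix (Fin (n + 1)) (Fin (n + 1)) (LaurentPolynomial ℤ)) :
    (pad n S * M).submatrix Fin.castSucc Fin.castSucc
      = S * M.submatrix Fin.castSucc Fin.castSucc := by
  ext i j
  simp [pad, mul_apply, Fin.sum_univ_castSucc]

theorem pad_mul_apply_last (S : Matrix (Fin n) (Fin n) (LaurentPolynomial ℤ))
    (M : Matrix (Fin (n + 1)) (Fin (n + 1)) (LaurentPolynomial ℤ)) (j : Fin (n + 1)) :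
    (pad n S * M) (Fin.last n) j = M (Fin.last n) j := by
  simp [pad, mul_apply, Fin.sum_univ_castSucc]

theorem det_pad_mul_sub (S : Matrix (Fin n) (Fin n) (LaurentPolynomial ℤ))
    (M E : Matrix (Fin (n + 1)) (Fin (n + 1)) (LaurentPolynomial ℤ))
    (hM : M.submatrix Fin.castSucc Fin.castSucc = 1)
    (hE : E.submatrix Fin.castSucc Fin.castSucc = 1)
    (hrow : ∀ j : Fin n, M (Fin.last n) j.castSucc = E (Fin.last n) j.castSucc) :
    (pad n S * M - E).det
      = (M (Fin.last n) (Fin.last n) - E (Fin.last n) (Fin.last n)) * (S - 1).det := by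
  have hblock : (pad n S * M - E).submatrix Fin.castSucc Fin.castSucc = S - 1 := by
    rw [Matrix.submatrix_sub, Pi.sub_apply, Pi.sub_apply, pad_mul_submatrix_castSucc, hM, hE,
      mul_one]
  rw [det_succ_of_row_last_eq_zero, hblock]
  · rw [Matrix.sub_apply, pad_mul_apply_last]
  · simp [pad_mul_apply_last, hrow]

theorem det_pad_mul_sub_transvection (S : Matrix (Fin n) (Fin n) (LaurentPolynomial ℤ))
    (k : Fin n) (a b c : LaurentPolynomial ℤ) :
    (pad n S * (1 + single k.castSucc (Fin.last n) a + single (Fin.last n) k.castSucc b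
        + single (Fin.last n) (Fin.last n) c) - transvection (Fin.last n) k.castSucc b).det
      = c * (S - 1).det := by
  have hk : ∀ j : Fin n, Fin.last n ≠ j.castSucc := fun j => (Fin.castSucc_lt_last j).ne'
  rw [det_pad_mul_sub]
  · simp [transvection]
  · ext i j : 1
    simp [one_apply, hk]
  · ext i j : 1
    simp [transvection, one_apply, hk]
  · simp [transvection, hk]

end pad

theorem wadaStab_eq_wadaBlock (m : ℕ) (hn : 1 ≤ m + 1) :
    wadaStab (m + 1) hn = wadaBlock (Fin.last m).castSucc (Fin.last (m + 1)) (T 1) := by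
  rw [wadaBlock, T_pow]
  rfl

theorem stmt15 (n : ℕ) (hn : 1 ≤ n) (S : Matrix (Fin n) (Fin n) (LaurentPolynomial ℤ)) :
    (pad n S * wadaStab n hn - 1).det = -(T 1) * (S - 1).det := by
  obtain ⟨m, rfl⟩ : ∃ m, n = m + 1 := ⟨n - 1, by omega⟩
  have hpq : (Fin.last m).castSucc ≠ Fin.last (m + 1) := (Fin.castSucc_lt_last _).ne
  have hT : (T 1 : LaurentPolynomial ℤ) * T (-1) = 1 := by rw [← T_add, add_neg_cancel, T_zero]
  set E := transvection (Fin.last (m + 1)) (Fin.last m).castSucc (-T (-1) : LaurentPolynomial ℤ)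
  calc (pad (m + 1) S * wadaStab (m + 1) hn - 1).det
      = ((pad (m + 1) S * wadaStab (m + 1) hn - 1) * E).det := by
        rw [det_mul, det_transvection_of_ne _ _ hpq.symm, mul_one]
    _ = (pad (m + 1) S * (wadaStab (m + 1) hn * E) - E).det := by
        rw [Matrix.sub_mul, Matrix.one_mul, Matrix.mul_assoc]
    _ = -T 1 * (S - 1).det := by
        rw [wadaStab_eq_wadaBlock, wadaBlock_mul_transvection hpq hT, det_pad_mul_sub_transvection]
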